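/- If Z_1,...,Z_n are i.i.d. zero-mean generalized Gaussian random variables with shape parameter p and scale parameter \alpha, then X = \sum_{i=1}^n |Z_i|^p follows a Gamma distribution with shape parameter n/p and scale parameter \alpha^p; that is, X has density f_X(x) = x^{n/p - 1} e^{-x/\alpha^p} / (\Gamma(n/p) \alpha^n) for x \geq 0. -/

import Mathlib

/-!
If `Z` has the generalized Gaussian density, folding the symmetric density onto `(0, ∞)` and
substituting `y = x ^ p` shows that `|Z| ^ p` is Gamma distributed with shape `1 / p` and scale
`α ^ p` (rate `α ^ (-p)`). Gamma laws with a common rate form a convolution semigroup: on `(0, u)`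
the product of the two densities is `exp (-r u)` times `x ^ (a - 1) (u - x) ^ (b - 1)`, whose
integral is `u ^ (a + b - 1) B(a, b)`. Induction on `n` then gives the law of the sum.
-/

open MeasureTheory ProbabilityTheory Set Real
open scoped ENNReal

theorem lintegral_comp_abs (f : ℝ → ℝ≥0∞) :
    ∫⁻ x, f |x| = 2 * ∫⁻ x in Ioi 0, f x := by
  have h_pos : ∫⁻ x in Ioi 0, f |x| = ∫⁻ x in Ioi 0, f x :=
    setLIntegral_congr_fun measurableSet_Ioi fun x hx => by rw [abs_of_pos hx]
  have h_neg : ∫⁻ x in Iic 0, f |x| = ∫⁻ x in Ioi 0, f |x| := by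
    rw [← lintegral_indicator measurableSet_Iic, ← lintegral_neg_eq_self,
      setLIntegral_congr Ioi_ae_eq_Ici, ← lintegral_indicator measurableSet_Ici]
    congr 1 with x
    by_cases hx : 0 ≤ x <;> simp [indicator, hx, abs_neg]
  rw [← lintegral_add_compl _ measurableSet_Ioi, compl_Ioi, h_neg, h_pos, two_mul]

theorem map_abs_withDensity_comp_abs {h : ℝ → ℝ≥0∞} (hh : Measurable h) :
    (volume.withDensity fun x => h |x|).map abs
      = (volume.restrict (Ioi 0)).withDensity fun x => 2 * h x := by
  refine Measure.ext_of_lintegral _ fun φ hφ => ?_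
  rw [lintegral_map hφ measurable_abs, lintegral_withDensity_eq_lintegral_mul _ (by fun_prop)
      (by fun_prop), lintegral_withDensity_eq_lintegral_mul _ (by fun_prop) hφ]
  simp only [Pi.mul_apply, mul_assoc]
  rw [lintegral_comp_abs fun x => h x * φ x, lintegral_const_mul' _ _ ENNReal.ofNat_ne_top]

theorem map_rpow_restrict_Ioi_withDensity {p : ℝ} (hp : p ≠ 0) {g : ℝ → ℝ≥0∞}
    (hg : Measurable g) :
    ((volume.restrict (Ioi 0)).withDensity g).map (· ^ p)
      = (volume.restrict (Ioi 0)).withDensity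
          fun y => ENNReal.ofReal (|p⁻¹| * y ^ (p⁻¹ - 1)) * g (y ^ p⁻¹) := by
  have h_image : (fun y : ℝ => y ^ p⁻¹) '' Ioi 0 = Ioi 0 :=
    Subset.antisymm (image_subset_iff.2 fun y hy => rpow_pos_of_pos hy _)
      fun x hx => ⟨x ^ p, rpow_pos_of_pos hx _, rpow_rpow_inv (le_of_lt hx) hp⟩
  refine Measure.ext_of_lintegral _ fun φ hφ => ?_
  rw [lintegral_map hφ (by fun_prop), lintegral_withDensity_eq_lintegral_mul _ hg (by fun_prop),
    lintegral_withDensity_eq_lintegral_mul _ (by fun_prop) hφ]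
  conv_lhs => rw [← h_image]
  rw [lintegral_image_eq_lintegral_abs_deriv_mul measurableSet_Ioi
    (fun y hy => (hasDerivAt_rpow_const (Or.inl (ne_of_gt hy))).hasDerivWithinAt)
    ((rpow_left_injOn (inv_ne_zero hp)).mono Ioi_subset_Ici_self)]
  refine setLIntegral_congr_fun measurableSet_Ioi fun y hy => ?_
  simp only [Pi.mul_apply]
  rw [rpow_inv_rpow (le_of_lt hy) hp, abs_mul, abs_of_pos (rpow_pos_of_pos hy _), mul_assoc]

theorem ofReal_beta_eq_lintegral {a b : ℝ} (ha : 0 < a) (hb : 0 < b) :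
    ENNReal.ofReal (beta a b)
      = ∫⁻ x in Ioo 0 1, ENNReal.ofReal (x ^ (a - 1) * (1 - x) ^ (b - 1)) := by
  have h := lintegral_betaPDF_eq_one ha hb
  have hB := beta_pos ha hb
  simp_rw [lintegral_betaPDF, mul_assoc, ENNReal.ofReal_mul (one_div_pos.2 hB).le] at h
  rw [lintegral_const_mul' _ _ ENNReal.ofReal_ne_top] at h
  calc ENNReal.ofReal (beta a b)
      = ENNReal.ofReal (beta a b) * (ENNReal.ofReal (1 / beta a b) * _) := by rw [h, mul_one]
    _ = _ := by rw [← mul_assoc, ← ENNReal.ofReal_mul hB.le, mul_one_div_cancel hB.ne',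
          ENNReal.ofReal_one, one_mul]

theorem lintegral_Ioo_rpow_mul_sub_rpow {a b u : ℝ} (ha : 0 < a) (hb : 0 < b) (hu : 0 < u) :
    ∫⁻ x in Ioo 0 u, ENNReal.ofReal (x ^ (a - 1) * (u - x) ^ (b - 1))
      = ENNReal.ofReal (u ^ (a + b - 1) * beta a b) := by
  have h_image : (u * ·) '' Ioo 0 1 = Ioo 0 u := by
    rw [image_mul_left_Ioo hu, mul_zero, mul_one]
  rw [← h_image, lintegral_image_eq_lintegral_abs_deriv_mul measurableSet_Ioo
      (fun x _ => ((hasDerivAt_id' x).const_mul u).hasDerivWithinAt)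
      (mul_right_injective₀ hu.ne').injOn,
    ENNReal.ofReal_mul (by positivity), ofReal_beta_eq_lintegral ha hb,
    ← lintegral_const_mul' _ _ ENNReal.ofReal_ne_top]
  refine setLIntegral_congr_fun measurableSet_Ioo fun x ⟨hx0, hx1⟩ => ?_
  rw [mul_one, abs_of_pos hu, ← ENNReal.ofReal_mul hu.le, ← ENNReal.ofReal_mul (by positivity)]
  congr 1
  rw [mul_rpow hu.le hx0.le, show u - u * x = u * (1 - x) by ring, mul_rpow hu.le (by linarith),
    show a + b - 1 = 1 + (a - 1) + (b - 1) by ring, rpow_add hu, rpow_add hu, rpow_one]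
  ring

theorem gammaMeasure_eq_restrict_Ioi_withDensity (a r : ℝ) :
    gammaMeasure a r = (volume.restrict (Ioi 0)).withDensity (gammaPDF a r) := by
  rw [gammaMeasure, ← withDensity_indicator measurableSet_Ioi]
  refine withDensity_congr_ae ?_
  filter_upwards [compl_mem_ae_iff.2 (measure_singleton (0 : ℝ))] with x hx
  rcases lt_or_gt_of_ne hx with hx | hx
  · simp [gammaPDF_of_neg hx, hx.not_gt]
  · simp [hx]

theorem gammaPDF_inv_eq {a θ x : ℝ} (hθ : 0 < θ) :
    gammaPDF a θ⁻¹ x = ENNReal.ofReal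
      (if 0 ≤ x then x ^ (a - 1) * exp (-x / θ) / (Gamma a * θ ^ a) else 0) := by
  rw [gammaPDF_eq, inv_rpow hθ.le, ← div_eq_inv_mul, neg_div]
  congr 2
  ring

theorem lconvolution_gammaPDF_of_neg {a b r u : ℝ} (hu : u < 0) :
    (gammaPDF a r ⋆ₗ gammaPDF b r) u = gammaPDF (a + b) r u := by
  rw [gammaPDF_of_neg hu, lconvolution_def]
  refine (lintegral_congr fun x => ?_).trans lintegral_zero
  rcases lt_or_ge x 0 with hx | hx
  · rw [gammaPDF_of_neg hx, zero_mul]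
  · rw [gammaPDF_of_neg (by linarith : -x + u < 0), mul_zero]

theorem lconvolution_gammaPDF_of_pos {a b r u : ℝ} (ha : 0 < a) (hb : 0 < b) (hr : 0 < r)
    (hu : 0 < u) : (gammaPDF a r ⋆ₗ gammaPDF b r) u = gammaPDF (a + b) r u := by
  have hΓa := Gamma_pos_of_pos ha
  have hΓb := Gamma_pos_of_pos hb
  set K := r ^ a / Gamma a * (r ^ b / Gamma b) * exp (-(r * u)) with hK
  have h_supp :
      (Function.support fun x => gammaPDF a r x * gammaPDF b r (-x + u)) ⊆ Icc 0 u := by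
    intro x hx
    contrapose! hx
    rcases not_and_or.1 (mt mem_Icc.2 hx) with hx | hx
    · simp [gammaPDF_of_neg (not_le.1 hx)]
    · simp [gammaPDF_of_neg (by linarith [not_le.1 hx] : -x + u < 0)]
  have h_Ioo : ∀ x ∈ Ioo 0 u, gammaPDF a r x * gammaPDF b r (-x + u)
      = ENNReal.ofReal K * ENNReal.ofReal (x ^ (a - 1) * (u - x) ^ (b - 1)) := by
    rintro x ⟨hx0, hxu⟩
    have h_exp : exp (-(r * x)) * exp (-(r * (-x + u))) = exp (-(r * u)) := by
      rw [← exp_add]; ring_nf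
    rw [gammaPDF_of_nonneg hx0.le, gammaPDF_of_nonneg (by linarith), ← ENNReal.ofReal_mul
      (by positivity), ← ENNReal.ofReal_mul (by positivity)]
    congr 1
    rw [show -x + u = u - x by ring] at h_exp ⊢
    linear_combination
      (r ^ a / Gamma a * x ^ (a - 1) * (r ^ b / Gamma b * (u - x) ^ (b - 1))) * h_exp
  rw [lconvolution_def, ← setLIntegral_eq_of_support_subset h_supp,
    ← setLIntegral_congr (Ioo_ae_eq_Icc' (by simp) (by simp)),
    setLIntegral_congr_fun measurableSet_Ioo h_Ioo, lintegral_const_mul' _ _ ENNReal.ofReal_ne_top,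
    lintegral_Ioo_rpow_mul_sub_rpow ha hb hu, ← ENNReal.ofReal_mul (by positivity),
    gammaPDF_of_nonneg hu.le, beta, rpow_add hr]
  congr 1
  rw [hK]
  field_simp

theorem gammaMeasure_conv_gammaMeasure {a b r : ℝ} (ha : 0 < a) (hb : 0 < b) (hr : 0 < r) :
    gammaMeasure a r ∗ gammaMeasure b r = gammaMeasure (a + b) r := by
  have h_meas (c : ℝ) : Measurable (gammaPDF c r) := (measurable_gammaPDFReal c r).ennreal_ofReal
  rw [gammaMeasure, gammaMeasure, gammaMeasure,
    conv_withDensity_eq_lconvolution (h_meas a) (h_meas b)]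
  refine withDensity_congr_ae ?_
  filter_upwards [compl_mem_ae_iff.2 (measure_singleton (0 : ℝ))] with u hu
  rcases lt_or_gt_of_ne hu with hu | hu
  · exact lconvolution_gammaPDF_of_neg hu
  · exact lconvolution_gammaPDF_of_pos ha hb hr hu

theorem map_sum_pi_fin_succ {α M : Type*} [MeasurableSpace α] [AddCommMonoid M]
    [MeasurableSpace M] [MeasurableAdd₂ M] (μ : Measure α) [SigmaFinite μ] {f : α → M}
    (hf : Measurable f) (m : ℕ) :
    (Measure.pi fun _ : Fin (m + 1) => μ).map (fun z => ∑ i, f (z i))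
      = μ.map f ∗ (Measure.pi fun _ : Fin m => μ).map (fun z => ∑ i, f (z i)) := by
  have h_sum : Measurable fun z : Fin m → α => ∑ i, f (z i) :=
    Finset.measurable_sum _ fun i _ => hf.comp (measurable_pi_apply i)
  have h_split : (fun z : Fin (m + 1) → α => ∑ i, f (z i))
      = ((fun q : M × M => q.1 + q.2) ∘ Prod.map f (fun z : Fin m → α => ∑ i, f (z i)))
        ∘ MeasurableEquiv.piFinSuccAbove (fun _ => α) 0 := by
    funext z
    simp [Fin.sum_univ_succ, MeasurableEquiv.piFinSuccAbove_apply, Fin.tail]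
  rw [Measure.conv, Measure.map_prod_map _ _ hf h_sum,
    Measure.map_map measurable_add (hf.prodMap h_sum),
    ← (measurePreserving_piFinSuccAbove (fun _ => μ) 0).map_eq, Measure.map_map
      (measurable_add.comp (hf.prodMap h_sum)) (MeasurableEquiv.measurable _), h_split]

theorem map_sum_pi_eq_gammaMeasure {α : Type*} [MeasurableSpace α] (μ : Measure α)
    [SigmaFinite μ] {f : α → ℝ} (hf : Measurable f) {a r : ℝ} (ha : 0 < a) (hr : 0 < r)
    (hμf : μ.map f = gammaMeasure a r) {n : ℕ} (hn : 0 < n) :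
    (Measure.pi fun _ : Fin n => μ).map (fun z => ∑ i, f (z i)) = gammaMeasure (n * a) r := by
  induction n, hn using Nat.le_induction with
  | base =>
    have := isProbabilityMeasure_gammaMeasure ha hr
    rw [map_sum_pi_fin_succ μ hf 0, hμf, Measure.pi_of_empty, Measure.map_dirac' (by fun_prop)]
    simp [Measure.conv_dirac_zero]
  | succ n hn ih =>
    rw [map_sum_pi_fin_succ μ hf n, ih, hμf, gammaMeasure_conv_gammaMeasure ha (by positivity) hr]
    congr 1
    push_cast
    ring

noncomputable def generalizedGaussianPDFReal (p α z : ℝ) : ℝ :=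
  p / (2 * α * Gamma (1 / p)) * exp (-(|z| ^ p) / α ^ p)

noncomputable def generalizedGaussianMeasure (p α : ℝ) : Measure ℝ :=
  volume.withDensity fun z => ENNReal.ofReal (generalizedGaussianPDFReal p α z)

theorem map_abs_rpow_generalizedGaussianMeasure {p α : ℝ} (hp : 0 < p) (hα : 0 < α) :
    (generalizedGaussianMeasure p α).map (fun z => |z| ^ p)
      = gammaMeasure (1 / p) (α ^ p)⁻¹ := by
  set h : ℝ → ℝ≥0∞ := fun y =>
    ENNReal.ofReal (p / (2 * α * Gamma (1 / p)) * exp (-(y ^ p) / α ^ p))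
  have h_density : generalizedGaussianMeasure p α = volume.withDensity fun x => h |x| := rfl
  have h_comp : (fun z : ℝ => |z| ^ p) = (· ^ p) ∘ abs := rfl
  rw [h_density, h_comp, ← Measure.map_map (by fun_prop) measurable_abs,
    map_abs_withDensity_comp_abs (by fun_prop),
    map_rpow_restrict_Ioi_withDensity hp.ne' (by fun_prop),
    gammaMeasure_eq_restrict_Ioi_withDensity]
  refine withDensity_congr_ae
    (ae_restrict_of_forall_mem measurableSet_Ioi fun y (hy : 0 < y) => ?_)
  have hΓ := Gamma_pos_of_pos (one_div_pos.2 hp)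
  simp only [h]
  rw [rpow_inv_rpow hy.le hp.ne', gammaPDF_of_nonneg hy.le, ← ENNReal.ofReal_ofNat 2,
    ← ENNReal.ofReal_mul zero_le_two, ← ENNReal.ofReal_mul (by positivity),
    inv_rpow (by positivity), ← rpow_mul hα.le, mul_one_div_cancel hp.ne', rpow_one,
    abs_of_pos (inv_pos.2 hp), one_div,
    show -((α ^ p)⁻¹ * y) = -y / α ^ p by ring]
  congr 1
  field_simp

theorem ggd_sum_abs_pow_gamma (p α : ℝ) (hp : 0 < p) (hα : 0 < α)
    (n : ℕ) (hn : 0 < n)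
    (μ : Measure ℝ) [SigmaFinite μ]
    (hμ : μ = volume.withDensity fun z =>
      ENNReal.ofReal (p / (2 * α * Real.Gamma (1 / p)) * Real.exp (-(|z| ^ p) / α ^ p))) :
    Measure.map (fun z : Fin n → ℝ => ∑ i, |z i| ^ p) (Measure.pi fun _ => μ)
      = volume.withDensity fun x => ENNReal.ofReal
          (if 0 ≤ x then x ^ ((n : ℝ) / p - 1) * Real.exp (-x / α ^ p)
              / (Real.Gamma ((n : ℝ) / p) * α ^ n)
           else 0) := by
  have h_abs : μ.map (fun z => |z| ^ p) = gammaMeasure (1 / p) (α ^ p)⁻¹ :=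
    hμ ▸ map_abs_rpow_generalizedGaussianMeasure hp hα
  have h_scale : (α ^ p) ^ ((n : ℝ) / p) = α ^ n := by
    rw [← rpow_mul hα.le, mul_div_cancel₀ _ hp.ne', rpow_natCast]
  rw [map_sum_pi_eq_gammaMeasure μ (by fun_prop) (by positivity) (by positivity) h_abs hn,
    gammaMeasure]
  congr 1 with x
  rw [mul_one_div, gammaPDF_inv_eq (by positivity), h_scale]
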